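/- A ring R is δ-reversible if and only if for every idempotent e ∈ R the corner ring eRe (a ring with identity element e) is δ-reversible. -/

import Mathlib

/-- A right ideal `I` of `R` (a submodule of `R` as a right `R`-module, i.e. an
`Rᵐᵒᵖ`-submodule) is essential if every right ideal meeting it trivially is trivial. -/
def IsEssentialRightIdeal (R : Type*) [Ring R] (I : Submodule Rᵐᵒᵖ R) : Prop :=
  ∀ K : Submodule Rᵐᵒᵖ R, K ⊓ I = ⊥ → K = ⊥

/-- The Zhou radical `δ(R)`: the intersection of all essential maximal right ideals of `R`
(the whole ring if there are no essential maximal right ideals). -/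
def zhouRadical (R : Type*) [Ring R] : Set R :=
  ⋂₀ { S : Set R | ∃ I : Submodule Rᵐᵒᵖ R, IsCoatom I ∧ IsEssentialRightIdeal R I ∧ S = ↑I }

/-- A ring `R` is `δ`-reversible if `a * b = 0` implies `b * a ∈ δ(R)`. -/
def IsDeltaReversible (R : Type*) [Ring R] : Prop :=
  ∀ a b : R, a * b = 0 → b * a ∈ zhouRadical R

section Corner

variable {R : Type*} [Ring R]

/-- The corner ring `eRe = {exe : x ∈ R}` associated with an idempotent `e`,
realized as the set of elements fixed by `x ↦ e * x * e`. -/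
def CornerRing (e : R) (_he : e * e = e) : Type _ := {x : R // e * x * e = x}

namespace CornerRing

variable {e : R} {he : e * e = e}

theorem absorb_left (he : e * e = e) {x : R} (hx : e * x * e = x) : e * x = x := by
  conv_lhs => rw [← hx]
  rw [← mul_assoc, ← mul_assoc, he]
  exact hx

theorem absorb_right (he : e * e = e) {x : R} (hx : e * x * e = x) : x * e = x := by
  conv_lhs => rw [← hx]
  rw [mul_assoc, mul_assoc, he, ← mul_assoc]
  exact hx

instance : Add (CornerRing e he) :=
  ⟨fun x y => ⟨x.1 + y.1, by rw [mul_add, add_mul, x.2, y.2]⟩⟩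

instance : Zero (CornerRing e he) := ⟨⟨0, by simp⟩⟩

instance : Neg (CornerRing e he) :=
  ⟨fun x => ⟨-x.1, by rw [mul_neg, neg_mul, x.2]⟩⟩

instance : Sub (CornerRing e he) :=
  ⟨fun x y => ⟨x.1 - y.1, by rw [mul_sub, sub_mul, x.2, y.2]⟩⟩

instance : SMul ℕ (CornerRing e he) :=
  ⟨fun n x => ⟨n • x.1, by rw [mul_smul_comm, smul_mul_assoc, x.2]⟩⟩

instance : SMul ℤ (CornerRing e he) :=
  ⟨fun n x => ⟨n • x.1, by rw [mul_smul_comm, smul_mul_assoc, x.2]⟩⟩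

instance : AddCommGroup (CornerRing e he) :=
  Function.Injective.addCommGroup (fun x => x.1) Subtype.val_injective
    rfl (fun _ _ => rfl) (fun _ => rfl) (fun _ _ => rfl) (fun _ _ => rfl) (fun _ _ => rfl)

instance : Mul (CornerRing e he) :=
  ⟨fun x y => ⟨x.1 * y.1, by
    have h1 : e * x.1 = x.1 := absorb_left he x.2
    have h2 : y.1 * e = y.1 := absorb_right he y.2
    rw [← mul_assoc, h1, mul_assoc, h2]⟩⟩

instance : One (CornerRing e he) := ⟨⟨e, by rw [he, he]⟩⟩

/-- The corner ring `eRe` is a ring with identity element `e`. -/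
instance : Ring (CornerRing e he) :=
  { (inferInstance : AddCommGroup (CornerRing e he)) with
    mul := (· * ·)
    one := 1
    mul_assoc := fun x y z => Subtype.ext (mul_assoc x.1 y.1 z.1)
    one_mul := fun x => Subtype.ext (absorb_left he x.2)
    mul_one := fun x => Subtype.ext (absorb_right he x.2)
    left_distrib := fun x y z => Subtype.ext (left_distrib x.1 y.1 z.1)
    right_distrib := fun x y z => Subtype.ext (right_distrib x.1 y.1 z.1)
    zero_mul := fun x => Subtype.ext (zero_mul x.1)
    mul_zero := fun x => Subtype.ext (mul_zero x.1) }

end CornerRing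

end Corner

/-! For an essential maximal right ideal `M` of `eRe`, the right ideal `{x | e x R e ⊆ M}`
of `R` is again maximal and essential, and its elements lying in `eRe` are exactly those of
`M`. Hence `δ(R) ∩ eRe ⊆ δ(eRe)`, which gives the forward direction because `ab = 0` in `eRe`
means `ab = 0` in `R`. The converse is the case `e = 1`: `1R1 ≅ R`, and `δ` is transported by
ring isomorphisms. -/

theorem Submodule.eq_top_of_one_mem_rightIdeal {A : Type*} [Ring A] {I : Submodule Aᵐᵒᵖ A}
    (h : (1 : A) ∈ I) : I = ⊤ :=
  eq_top_iff.2 fun x _ => by simpa using I.smul_mem (MulOpposite.op x) h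

theorem mem_zhouRadical_iff {A : Type*} [Ring A] {x : A} :
    x ∈ zhouRadical A ↔
      ∀ I : Submodule Aᵐᵒᵖ A, IsCoatom I → IsEssentialRightIdeal A I → x ∈ I := by
  simp only [zhouRadical, Set.mem_sInter, Set.mem_ofPred_eq]
  constructor
  · exact fun h I hI hIe => h I ⟨I, hI, hIe, rfl⟩
  · rintro h _ ⟨I, hI, hIe, rfl⟩
    exact h I hI hIe

section RingEquiv

variable {A B : Type*} [Ring A] [Ring B]

def RingEquiv.rightIdealOrderIso (f : A ≃+* B) :
    Submodule Aᵐᵒᵖ A ≃o Submodule Bᵐᵒᵖ B :=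
  have := RingHomInvPair.of_ringEquiv (RingEquiv.op f)
  have := this.symm
  Submodule.orderIsoMapComap (σ₁₂ := (RingEquiv.op f : Aᵐᵒᵖ →+* Bᵐᵒᵖ))
    { f.toAddEquiv with map_smul' := fun r x => map_mul f x r.unop }

theorem IsEssentialRightIdeal.of_orderIso (φ : Submodule Bᵐᵒᵖ B ≃o Submodule Aᵐᵒᵖ A)
    {I : Submodule Bᵐᵒᵖ B} (hI : IsEssentialRightIdeal B I) :
    IsEssentialRightIdeal A (φ I) := by
  intro K hK
  have : φ.symm K ⊓ I = ⊥ := by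
    rw [← φ.symm_apply_apply I, ← φ.symm.map_inf, hK, map_bot]
  rw [← φ.apply_symm_apply K, hI _ this, map_bot]

theorem RingEquiv.map_mem_zhouRadical (f : A ≃+* B) {x : A} (hx : x ∈ zhouRadical A) :
    f x ∈ zhouRadical B :=
  mem_zhouRadical_iff.2 fun I hI hIe =>
    mem_zhouRadical_iff.1 hx (f.rightIdealOrderIso.symm I)
      ((OrderIso.isCoatom_iff _ _).2 hI) (hIe.of_orderIso _)

theorem IsDeltaReversible.of_ringEquiv (f : A ≃+* B) (hA : IsDeltaReversible A) :
    IsDeltaReversible B := fun a b hab => by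
  simpa using f.map_mem_zhouRadical (hA (f.symm a) (f.symm b) (by simp [← map_mul, hab]))

end RingEquiv

namespace CornerRing

variable {R : Type*} [Ring R] {e : R} {he : e * e = e}

def equivOfEqOne (he : (1 : R) * 1 = 1) : CornerRing (1 : R) he ≃+* R where
  toFun x := x.1
  invFun x := ⟨x, by rw [one_mul, mul_one]⟩
  left_inv _ := rfl
  right_inv _ := rfl
  map_mul' _ _ := rfl
  map_add' _ _ := rfl

variable (he) in
def compress (x : R) : CornerRing e he :=
  ⟨e * x * e, by simp only [← mul_assoc, he]; simp only [mul_assoc, he]⟩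

@[simp]
theorem val_compress (x : R) : (compress he x).1 = e * x * e := rfl

@[simp]
theorem val_one : (1 : CornerRing e he).1 = e := rfl

@[simp]
theorem val_mul (x y : CornerRing e he) : (x * y).1 = x.1 * y.1 := rfl

@[simp]
theorem val_zero : (0 : CornerRing e he).1 = 0 := rfl

@[simp]
theorem val_add (x y : CornerRing e he) : (x + y).1 = x.1 + y.1 := rfl

@[simp]
theorem compress_zero : compress he (0 : R) = 0 := Subtype.ext (by simp)

theorem compress_one : compress he (1 : R) = 1 := Subtype.ext (by simp [he])

theorem compress_val (x : CornerRing e he) : compress he x.1 = x := Subtype.ext x.2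

theorem compress_add (x y : R) : compress he (x + y) = compress he x + compress he y :=
  Subtype.ext (by simp [mul_add, add_mul])

theorem mul_compress (x : CornerRing e he) (r : R) : x * compress he r = compress he (x.1 * r) :=
  Subtype.ext (by simp [← mul_assoc, absorb_right he x.2, absorb_left he x.2])

theorem compress_mul_val (r : R) (x : CornerRing e he) :
    compress he r * x = compress he (r * x.1) :=
  Subtype.ext (by simp [mul_assoc, absorb_right he x.2, absorb_left he x.2])

theorem compress_one_sub_mul (x : R) : compress he ((1 - e) * x) = 0 :=
  Subtype.ext (by simp [← mul_assoc, mul_sub, he])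

def liftRightIdeal (M : Submodule (CornerRing e he)ᵐᵒᵖ (CornerRing e he)) :
    Submodule Rᵐᵒᵖ R where
  carrier := {x | ∀ r, compress he (x * r) ∈ M}
  add_mem' hx hy r := by simpa only [add_mul, compress_add] using M.add_mem (hx r) (hy r)
  zero_mem' r := by simpa only [zero_mul, compress_zero] using M.zero_mem
  smul_mem' s x hx r := by simpa only [MulOpposite.smul_eq_mul_unop, mul_assoc] using hx _

def compressRightIdeal (K : Submodule Rᵐᵒᵖ R) :
    Submodule (CornerRing e he)ᵐᵒᵖ (CornerRing e he) where
  carrier := compress he '' K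
  add_mem' := by
    rintro _ _ ⟨x, hx, rfl⟩ ⟨y, hy, rfl⟩
    exact ⟨x + y, K.add_mem hx hy, compress_add x y⟩
  zero_mem' := ⟨0, K.zero_mem, Subtype.ext (by simp)⟩
  smul_mem' := by
    rintro s _ ⟨x, hx, rfl⟩
    exact ⟨x * s.unop.1, K.smul_mem (MulOpposite.op s.unop.1) hx, (compress_mul_val x _).symm⟩

variable {M : Submodule (CornerRing e he)ᵐᵒᵖ (CornerRing e he)}

theorem mem_liftRightIdeal {x : R} : x ∈ liftRightIdeal M ↔ ∀ r, compress he (x * r) ∈ M :=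
  Iff.rfl

theorem val_mem_liftRightIdeal {x : CornerRing e he} : x.1 ∈ liftRightIdeal M ↔ x ∈ M := by
  refine ⟨fun h => by simpa [compress_val] using h 1, fun h r => ?_⟩
  rw [← mul_compress]
  exact M.smul_mem _ h

theorem mul_idempotent_mem_liftRightIdeal {x : R} :
    x * e ∈ liftRightIdeal M ↔ compress he x ∈ M := by
  have key : ∀ r, compress he (x * e * r) = compress he x * compress he r := fun r => by
    have he' : ∀ a : R, a * e * e = a * e := fun a => by rw [mul_assoc, he]
    exact Subtype.ext (by simp only [val_compress, val_mul, ← mul_assoc, he'])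
  refine ⟨fun h => ?_, fun h r => key r ▸ M.smul_mem _ h⟩
  have h1 := h 1
  rwa [key, compress_one, mul_one] at h1

theorem one_sub_idempotent_mul_mem_liftRightIdeal (x : R) : (1 - e) * x ∈ liftRightIdeal M :=
  fun r => by simpa only [mul_assoc, compress_one_sub_mul] using M.zero_mem

theorem eq_top_of_idempotent_mem {J : Submodule Rᵐᵒᵖ R} (hJ : liftRightIdeal M ≤ J)
    (heJ : e ∈ J) : J = ⊤ :=
  Submodule.eq_top_of_one_mem_rightIdeal <| by
    simpa only [mul_one, add_sub_cancel] using
      J.add_mem heJ (hJ (one_sub_idempotent_mul_mem_liftRightIdeal (M := M) 1))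

theorem idempotent_mul_mem_of_liftRightIdeal_le {J : Submodule Rᵐᵒᵖ R}
    (hJ : liftRightIdeal M ≤ J) {x : R} (hx : x ∈ J) : e * x ∈ J := by
  simpa [sub_mul] using J.sub_mem hx (hJ (one_sub_idempotent_mul_mem_liftRightIdeal (M := M) x))

theorem isCoatom_liftRightIdeal (hM : IsCoatom M) : IsCoatom (liftRightIdeal M) := by
  refine ⟨fun htop => hM.1 (Submodule.eq_top_of_one_mem_rightIdeal ?_), fun J hJ => ?_⟩
  · rw [← val_mem_liftRightIdeal, val_one, htop]
    exact Submodule.mem_top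
  obtain ⟨x, hxJ, hx⟩ := SetLike.exists_of_lt hJ
  obtain ⟨r, hr⟩ : ∃ r, compress he (x * r) ∉ M := by simpa [mem_liftRightIdeal] using hx
  have htop : M ⊔ Submodule.span _ {compress he (x * r)} = ⊤ :=
    hM.2 _ (left_lt_sup.2 fun h => hr (h (Submodule.mem_span_singleton_self _)))
  obtain ⟨m, hm, y, hy, hmy⟩ :=
    Submodule.mem_sup.1 (htop ▸ Submodule.mem_top : (1 : CornerRing e he) ∈ _)
  obtain ⟨c, rfl⟩ := Submodule.mem_span_singleton.1 hy
  -- `1 = m + exre·c` in `eRe`, so `e = m + e(xrec)` lies in `J`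
  have he_eq : e = m.1 + e * (x * (r * e * c.unop.1)) := by
    simpa [mul_assoc] using (congrArg Subtype.val hmy).symm
  refine eq_top_of_idempotent_mem hJ.le ?_
  rw [he_eq]
  exact J.add_mem (hJ.le (val_mem_liftRightIdeal.2 hm))
    (idempotent_mul_mem_of_liftRightIdeal_le hJ.le (J.smul_mem (MulOpposite.op _) hxJ))

theorem mul_idempotent_eq_zero_of_inf_liftRightIdeal_eq_bot
    (hM : IsEssentialRightIdeal _ M) {K : Submodule Rᵐᵒᵖ R}
    (hK : K ⊓ liftRightIdeal M = ⊥) {k : R} (hk : k ∈ K) : k * e = 0 := by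
  have hKe : ∀ k ∈ K, compress he k ∈ M → k * e = 0 := fun k hk hkM => by
    have : k * e ∈ K ⊓ liftRightIdeal M :=
      ⟨K.smul_mem (MulOpposite.op e) hk, mul_idempotent_mem_liftRightIdeal.2 hkM⟩
    simpa [hK] using this
  have hbot : compressRightIdeal K ⊓ M = ⊥ := by
    refine eq_bot_iff.2 ?_
    rintro _ ⟨⟨k, hk, rfl⟩, hkM⟩
    refine (Submodule.mem_bot _).2 (Subtype.ext ?_)
    simp [mul_assoc, hKe k hk hkM]
  have hk0 : compress he k = 0 := by
    have : compress he k ∈ compressRightIdeal K := ⟨k, hk, rfl⟩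
    simpa [hM _ hbot] using this
  exact hKe k hk (hk0 ▸ M.zero_mem)

theorem isEssentialRightIdeal_liftRightIdeal (hM : IsCoatom M)
    (hMe : IsEssentialRightIdeal _ M) : IsEssentialRightIdeal R (liftRightIdeal M) := by
  intro K hK
  by_contra hne
  have hKle : ¬ K ≤ liftRightIdeal M := fun h => hne (by rwa [inf_eq_left.2 h] at hK)
  have htop := (isCoatom_liftRightIdeal hM).2 _ (left_lt_sup.2 hKle)
  obtain ⟨m, hm, k, hk, hmk⟩ :=
    Submodule.mem_sup.1 (htop ▸ Submodule.mem_top : e ∈ _)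
  -- `K` is annihilated by `e` on the right, so `e = e·e = m·e` lies in `liftRightIdeal M`
  have he_eq : m * e = e := calc
    m * e = (m + k) * e := by
      rw [add_mul, mul_idempotent_eq_zero_of_inf_liftRightIdeal_eq_bot hMe hK hk, add_zero]
    _ = e := by rw [hmk, he]
  have he_mem := (liftRightIdeal M).smul_mem (MulOpposite.op e) hm
  rw [MulOpposite.smul_eq_mul_unop, MulOpposite.unop_op, he_eq] at he_mem
  exact (isCoatom_liftRightIdeal hM).1 (eq_top_of_idempotent_mem le_rfl he_mem)

theorem mem_zhouRadical_of_val_mem {x : CornerRing e he} (hx : x.1 ∈ zhouRadical R) :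
    x ∈ zhouRadical (CornerRing e he) :=
  mem_zhouRadical_iff.2 fun _ hM hMe => val_mem_liftRightIdeal.1 <|
    mem_zhouRadical_iff.1 hx _ (isCoatom_liftRightIdeal hM)
      (isEssentialRightIdeal_liftRightIdeal hM hMe)

end CornerRing

theorem IsDeltaReversible.cornerRing {R : Type*} [Ring R] (hR : IsDeltaReversible R) {e : R}
    (he : e * e = e) : IsDeltaReversible (CornerRing e he) := fun a b hab =>
  CornerRing.mem_zhouRadical_of_val_mem (hR a.1 b.1 (congrArg Subtype.val hab))

/-- `R` is δ-reversible iff the corner ring `eRe` is δ-reversible for every idempotent `e`. -/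
theorem deltaReversible_iff_corner (R : Type*) [Ring R] :
    IsDeltaReversible R ↔
      ∀ (e : R) (he : e * e = e), IsDeltaReversible (CornerRing e he) := by
  refine ⟨fun hR _ he => hR.cornerRing he, fun h => ?_⟩
  exact (h 1 (one_mul 1)).of_ringEquiv (CornerRing.equivOfEqOne (one_mul 1))
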